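/- arXiv:2203.07343 — 5 statements merged into one kernel-verified Lean document; each statement's English description precedes it below -/
import Mathlib

section
/- Let k ≥ 1 be an integer, let (r1, r2, r3) ∈ ℚ³ satisfy 2k·r1 − r2 − r3 = 0 and r1 + r2 + r3 = 1, and let N be a positive integer such that N·r1, N·r2 and N·r3 are all integers. Then 2k+1 divides N; in particular N ≥ 2k+1. -/
theorem Nat.dvd_of_natCast_mul_eq_one {m N : ℕ} {r : ℚ} (hr : (m : ℚ) * r = 1)
    (hz : ∃ z : ℤ, (N : ℚ) * r = z) : m ∣ N := by
  obtain ⟨z, hz⟩ := hz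
  have hN : (N : ℚ) = m * z :=
    calc (N : ℚ) = N * (m * r) := by rw [hr, mul_one]
      _ = m * (N * r) := by ring
      _ = m * z := by rw [hz]
  exact Int.natCast_dvd_natCast.mp ⟨z, by exact_mod_cast hN⟩

theorem complex_size_L2k1_general (k : ℕ) (r1 r2 r3 : ℚ)
    (h1 : 2 * (k : ℚ) * r1 - r2 - r3 = 0) (h2 : r1 + r2 + r3 = 1)
    (N : ℕ) (hN : 0 < N)
    (hz1 : ∃ z : ℤ, (N : ℚ) * r1 = z) :
    (2 * k + 1) ∣ N ∧ 2 * k + 1 ≤ N := by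
  have hr1 : ((2 * k + 1 : ℕ) : ℚ) * r1 = 1 := by
    push_cast
    linarith
  have hdvd := Nat.dvd_of_natCast_mul_eq_one hr1 hz1
  exact ⟨hdvd, Nat.le_of_dvd hN hdvd⟩

/-- Any size `N` of a complete complex built from the pot realizing `L_{2k,1}`
(Example 3.5) is divisible by `2k+1`: if `(r₁, r₂, r₃)` solves the construction-matrix
system and `N·rᵢ` are integers for a positive integer `N`, then `2k+1 ∣ N`, so `N ≥ 2k+1`. -/
theorem complex_size_L2k1 (k : ℕ) (hk : 1 ≤ k) (r1 r2 r3 : ℚ)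
    (h1 : 2 * (k : ℚ) * r1 - r2 - r3 = 0) (h2 : r1 + r2 + r3 = 1)
    (N : ℕ) (hN : 0 < N)
    (hz1 : ∃ z : ℤ, (N : ℚ) * r1 = z) (hz2 : ∃ z : ℤ, (N : ℚ) * r2 = z)
    (hz3 : ∃ z : ℤ, (N : ℚ) * r3 = z) :
    (2 * k + 1) ∣ N ∧ 2 * k + 1 ≤ N :=
  complex_size_L2k1_general k r1 r2 r3 h1 h2 N hN hz1
end

section
/- Let k ≥ 1 be an integer, let (r1, r2, r3, r4) ∈ ℚ⁴ satisfy (2k+1)·r1 − r2 − r3 − r4 = 0, r3 − r2 = 0, and r1 + r2 + r3 + r4 = 1, and let N be a positive integer such that N·r_i is an integer for i = 1, 2, 3, 4. Then 2k+2 divides N; in particular N ≥ 2k+2. -/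
/-! Adding the first construction equation to the normalization gives `(2k+2) r₁ = 1`, so
`N = (2k+2) · (N r₁)` with `N r₁` an integer. -/

theorem Nat.dvd_of_cast_mul_eq_one_of_mul_eq_intCast {a N : ℕ} {r : ℚ} (hr : (a : ℚ) * r = 1)
    (hNr : ∃ z : ℤ, (N : ℚ) * r = z) : a ∣ N := by
  obtain ⟨z, hz⟩ := hNr
  have hN : (N : ℚ) = a * z := by linear_combination (a : ℚ) * hz - (N : ℚ) * hr
  exact Int.natCast_dvd_natCast.mp ⟨z, by exact_mod_cast hN⟩

theorem complex_size_L2k1_odd_general (k : ℕ) (r1 r2 r3 r4 : ℚ)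
    (h1 : (2 * (k : ℚ) + 1) * r1 - r2 - r3 - r4 = 0)
    (h3 : r1 + r2 + r3 + r4 = 1)
    (N : ℕ) (hN : 0 < N)
    (hz1 : ∃ z : ℤ, (N : ℚ) * r1 = z) :
    (2 * k + 2) ∣ N ∧ 2 * k + 2 ≤ N := by
  have hr1 : ((2 * k + 2 : ℕ) : ℚ) * r1 = 1 := by push_cast; linarith
  have hdvd := Nat.dvd_of_cast_mul_eq_one_of_mul_eq_intCast hr1 hz1
  exact ⟨hdvd, Nat.le_of_dvd hN hdvd⟩

/-- Any size `N` of a complete complex built from the pot of Proposition 3.7 realizing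
`L_{2k+1,1}` is divisible by `2k+2`: if `(r₁, r₂, r₃, r₄)` solves the construction-matrix
system and `N·rᵢ` are integers for a positive integer `N`, then `2k+2 ∣ N`, so `N ≥ 2k+2`. -/
theorem complex_size_L2k1_odd (k : ℕ) (hk : 1 ≤ k) (r1 r2 r3 r4 : ℚ)
    (h1 : (2 * (k : ℚ) + 1) * r1 - r2 - r3 - r4 = 0) (h2 : r3 - r2 = 0)
    (h3 : r1 + r2 + r3 + r4 = 1)
    (N : ℕ) (hN : 0 < N)
    (hz1 : ∃ z : ℤ, (N : ℚ) * r1 = z) (hz2 : ∃ z : ℤ, (N : ℚ) * r2 = z)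
    (hz3 : ∃ z : ℤ, (N : ℚ) * r3 = z) (hz4 : ∃ z : ℤ, (N : ℚ) * r4 = z) :
    (2 * k + 2) ∣ N ∧ 2 * k + 2 ≤ N :=
  complex_size_L2k1_odd_general k r1 r2 r3 r4 h1 h3 N hN hz1
end

section
/- Let m ≥ 2 and n ≥ 1 be integers. The system of linear equations over ℚ in the variables r1, ..., r_{m+n} consisting of: (m−j)·r_j − (r_{j+1} + r_{j+2} + ... + r_m) = 0 for each j with 1 ≤ j ≤ m−1; r1 − r_{m+1} = 0; r_l − r_{l+1} = 0 for each l with m+1 ≤ l ≤ m+n−1; and r1 + r2 + ... + r_{m+n} = 1, has the unique solution r_i = 1/(m+n) for all i. -/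
/-!
Subtracting the clique equations for `j` and `j + 1` leaves `(m - j) (r j - r (j + 1)) = 0`, so
`r` is constant on the clique `1, …, m`; the path equations make it constant on `m + 1, …, m + n`,
and `r 1 = r (m + 1)` joins the two blocks. The normalization then forces the common value to be
`1 / (m + n)`.
-/

open Finset

lemma eq_of_forall_eq_succ {α : Type*} {r : ℕ → α} {a b : ℕ}
    (h : ∀ k, a ≤ k → k < b → r k = r (k + 1)) : ∀ i, a ≤ i → i ≤ b → r i = r a := by
  intro i hai
  induction i, hai using Nat.le_induction with
  | base => exact fun _ ↦ rfl
  | succ k hak ih =>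
    intro hkb
    rw [← h k hak (by omega)]
    exact ih (by omega)

lemma eq_one_div_card_of_sum_eq_one {ι K : Type*} [DivisionRing K] {s : Finset ι} {r : ι → K}
    {c : K} (hc : ∀ i ∈ s, r i = c) (hsum : ∑ i ∈ s, r i = 1) : c = 1 / #s := by
  rw [sum_congr rfl hc, sum_const, nsmul_eq_mul] at hsum
  exact eq_one_div_of_mul_eq_one_right hsum

lemma sum_Icc_eq_add_sum_Icc_succ {M : Type*} [AddCommMonoid M] (r : ℕ → M) {a b : ℕ}
    (hab : a ≤ b) : ∑ i ∈ Icc a b, r i = r a + ∑ i ∈ Icc (a + 1) b, r i := by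
  rw [Icc_eq_cons_Ioc hab, sum_cons, ← Icc_add_one_left_eq_Ioc]

lemma eq_succ_of_clique_balance {K : Type*} [Field K] [CharZero K] {m : ℕ} {r : ℕ → K}
    (h : ∀ j, 1 ≤ j → j ≤ m - 1 → ((m : K) - j) * r j - ∑ i ∈ Icc (j + 1) m, r i = 0) :
    ∀ j, 1 ≤ j → j < m → r j = r (j + 1) := by
  -- the balance equation also holds at `j = m`, where both terms vanish
  have hbal : ∀ j, 1 ≤ j → j ≤ m → ((m : K) - j) * r j = ∑ i ∈ Icc (j + 1) m, r i := by
    intro j hj hjm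
    rcases hjm.lt_or_eq with hjm | rfl
    · exact sub_eq_zero.mp (h j hj (by omega))
    · simp
  intro j hj hjm
  have hdiff : ((m : K) - j) * (r j - r (j + 1)) = 0 := by
    have hj₀ := hbal j hj hjm.le
    have hj₁ := hbal (j + 1) (by omega) hjm
    rw [sum_Icc_eq_add_sum_Icc_succ r hjm] at hj₀
    push_cast at hj₁
    linear_combination hj₀ - hj₁
  have hmj : (m : K) - j ≠ 0 := sub_ne_zero.mpr (Nat.cast_injective.ne hjm.ne')
  exact sub_eq_zero.mp ((mul_eq_zero.mp hdiff).resolve_left hmj)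

theorem lollipop_S3_construction_matrix_unique_solution_general (m n : ℕ)
    (r : ℕ → ℚ)
    (h1 : ∀ j, 1 ≤ j → j ≤ m - 1 →
      ((m : ℚ) - (j : ℚ)) * r j - (∑ i ∈ Finset.Icc (j + 1) m, r i) = 0)
    (h2 : r 1 - r (m + 1) = 0)
    (h3 : ∀ l, m + 1 ≤ l → l ≤ m + n - 1 → r l - r (l + 1) = 0)
    (h4 : ∑ i ∈ Finset.Icc 1 (m + n), r i = 1) :
    ∀ i, 1 ≤ i → i ≤ m + n → r i = 1 / ((m : ℚ) + (n : ℚ)) := by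
  have hclique : ∀ i, 1 ≤ i → i ≤ m → r i = r 1 :=
    eq_of_forall_eq_succ (eq_succ_of_clique_balance h1)
  have hpath : ∀ i, m + 1 ≤ i → i ≤ m + n → r i = r (m + 1) :=
    eq_of_forall_eq_succ fun l hl hln ↦ sub_eq_zero.mp (h3 l hl (by omega))
  have hconst : ∀ i ∈ Icc 1 (m + n), r i = r 1 := by
    intro i hi
    rw [mem_Icc] at hi
    rcases le_or_gt i m with him | him
    · exact hclique i hi.1 him
    · rw [hpath i him hi.2, sub_eq_zero.mp h2]
  intro i hi1 hi2
  rw [hconst i (mem_Icc.mpr ⟨hi1, hi2⟩), eq_one_div_card_of_sum_eq_one hconst h4]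
  simp

/-- The construction matrix of the Scenario 3 pot for the lollipop graph `L_{m,n}`
(Proposition 3.13, equation (14)) has the unique solution `rᵢ = 1/(m+n)` for all `i`.
Variables are indexed `1, …, m+n`. -/
theorem lollipop_S3_construction_matrix_unique_solution (m n : ℕ) (hm : 2 ≤ m) (hn : 1 ≤ n)
    (r : ℕ → ℚ)
    (h1 : ∀ j, 1 ≤ j → j ≤ m - 1 →
      ((m : ℚ) - (j : ℚ)) * r j - (∑ i ∈ Finset.Icc (j + 1) m, r i) = 0)
    (h2 : r 1 - r (m + 1) = 0)
    (h3 : ∀ l, m + 1 ≤ l → l ≤ m + n - 1 → r l - r (l + 1) = 0)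
    (h4 : ∑ i ∈ Finset.Icc 1 (m + n), r i = 1) :
    ∀ i, 1 ≤ i → i ≤ m + n → r i = 1 / ((m : ℚ) + (n : ℚ)) :=
  lollipop_S3_construction_matrix_unique_solution_general m n r h1 h2 h3 h4
end

section
/- Let m ≥ 2 and n ≥ m be integers. The system of linear equations over ℚ in the variables r1, ..., r_{n+1} consisting of: 2·r1 − r2 = 0; r_j − r_{j+1} = 0 for each j with 2 ≤ j ≤ n and j ≠ m; r_m − r_1 − r_{m+1} = 0; and r1 + r2 + ... + r_{n+1} = 1, has the unique solution r1 = 1/(m+n), r_i = 2/(m+n) for 2 ≤ i ≤ m, and r_j = 1/(m+n) for m+1 ≤ j ≤ n+1. -/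
/-!
The equations `r_j = r_{j+1}` propagate values along the two chains `2, …, m` and
`m+1, …, n+1`: the first equation gives `r_i = 2 r_1` on the head `2 ≤ i ≤ m`, and the
junction equation `r_m = r_1 + r_{m+1}` then gives `r_j = r_1` on the tail. The normalization
becomes `(1 + 2 (m - 1) + (n + 1 - m)) r_1 = (m + n) r_1 = 1`.
-/

open Finset

theorem Nat.eq_of_forall_succ_eq_of_le_of_le {α : Type*} {f : ℕ → α} {a b : ℕ}
    (h : ∀ k, a ≤ k → k < b → f (k + 1) = f k) {i : ℕ} (hai : a ≤ i) (hib : i ≤ b) :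
    f i = f a := by
  induction i, hai using Nat.le_induction with
  | base => rfl
  | succ k hak ih => rw [h k hak (by omega), ih (by omega)]

theorem Finset.sum_Icc_one_eq_add_sum_Icc_add_sum_Icc {M : Type*} [AddCommMonoid M]
    (f : ℕ → M) {m N : ℕ} (hm : 1 ≤ m) (hmN : m ≤ N) :
    ∑ i ∈ Icc 1 N, f i = f 1 + ∑ i ∈ Icc 2 m, f i + ∑ i ∈ Icc (m + 1) N, f i := by
  rw [Icc_add_one_left_eq_Ioc, show Icc 2 m = Ioc 1 m from Icc_add_one_left_eq_Ioc 1 m,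
    show Icc 1 N = Ioc 0 N from Icc_add_one_left_eq_Ioc 0 N,
    ← sum_Ioc_consecutive f (Nat.zero_le m) hmN, ← sum_Ioc_consecutive f zero_le_one hm,
    show Ioc 0 1 = {1} from Nat.Ioc_succ_singleton 0, sum_singleton]

section Tadpole

variable {m n : ℕ} {r : ℕ → ℚ}

theorem tadpole_head_eq (hn : m ≤ n) (h1 : 2 * r 1 - r 2 = 0)
    (h2 : ∀ j, 2 ≤ j → j ≤ n → j ≠ m → r j - r (j + 1) = 0)
    {i : ℕ} (h2i : 2 ≤ i) (him : i ≤ m) : r i = 2 * r 1 := by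
  have hchain : ∀ k, 2 ≤ k → k < m → r (k + 1) = r k := fun k h2k hkm ↦ by
    linarith [h2 k h2k (by omega) (by omega)]
  rw [Nat.eq_of_forall_succ_eq_of_le_of_le hchain h2i him]
  linarith

theorem tadpole_tail_eq (hm : 2 ≤ m) (hn : m ≤ n) (h1 : 2 * r 1 - r 2 = 0)
    (h2 : ∀ j, 2 ≤ j → j ≤ n → j ≠ m → r j - r (j + 1) = 0)
    (h3 : r m - r 1 - r (m + 1) = 0) {j : ℕ} (hmj : m + 1 ≤ j) (hjn : j ≤ n + 1) :
    r j = r 1 := by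
  have hchain : ∀ k, m + 1 ≤ k → k < n + 1 → r (k + 1) = r k := fun k hmk hkn ↦ by
    linarith [h2 k (by omega) (by omega) (by omega)]
  rw [Nat.eq_of_forall_succ_eq_of_le_of_le hchain hmj hjn]
  linarith [tadpole_head_eq hn h1 h2 hm le_rfl]

theorem tadpole_sum_eq (hm : 2 ≤ m) (hn : m ≤ n) (h1 : 2 * r 1 - r 2 = 0)
    (h2 : ∀ j, 2 ≤ j → j ≤ n → j ≠ m → r j - r (j + 1) = 0)
    (h3 : r m - r 1 - r (m + 1) = 0) :
    ∑ i ∈ Icc 1 (n + 1), r i = ((m : ℚ) + n) * r 1 := by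
  have hhead : ∑ i ∈ Icc 2 m, r i = (m - 1 : ℕ) • (2 * r 1) := by
    rw [sum_congr rfl fun i hi ↦ tadpole_head_eq hn h1 h2 (mem_Icc.1 hi).1 (mem_Icc.1 hi).2,
      sum_const, Nat.card_Icc]
    rfl
  have htail : ∑ i ∈ Icc (m + 1) (n + 1), r i = (n + 1 - m : ℕ) • r 1 := by
    rw [sum_congr rfl fun j hj ↦
        tadpole_tail_eq hm hn h1 h2 h3 (mem_Icc.1 hj).1 (mem_Icc.1 hj).2,
      sum_const, Nat.card_Icc, Nat.add_sub_add_right]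
  have hcount : ((m - 1 : ℕ) : ℚ) * 2 + 1 + ((n + 1 - m : ℕ) : ℚ) = m + n := by
    have hcount_nat : (m - 1) * 2 + 1 + (n + 1 - m) = m + n := by omega
    exact_mod_cast hcount_nat
  rw [sum_Icc_one_eq_add_sum_Icc_add_sum_Icc r (m := m) (by omega) (by omega), hhead, htail,
    nsmul_eq_mul, nsmul_eq_mul, ← hcount]
  ring

end Tadpole

/-- The construction matrix of the pot from Proposition 4.6 realizing the tadpole graph
`Tad_{m,n}` with `n ≥ m` has the unique solution `r₁ = 1/(m+n)`, `rᵢ = 2/(m+n)` for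
`2 ≤ i ≤ m`, and `r_j = 1/(m+n)` for `m+1 ≤ j ≤ n+1`. Variables are indexed `1, …, n+1`. -/
theorem tadpole_long_path_construction_matrix_unique_solution (m n : ℕ)
    (hm : 2 ≤ m) (hn : m ≤ n) (r : ℕ → ℚ)
    (h1 : 2 * r 1 - r 2 = 0)
    (h2 : ∀ j, 2 ≤ j → j ≤ n → j ≠ m → r j - r (j + 1) = 0)
    (h3 : r m - r 1 - r (m + 1) = 0)
    (h4 : ∑ i ∈ Finset.Icc 1 (n + 1), r i = 1) :
    r 1 = 1 / ((m : ℚ) + (n : ℚ)) ∧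
    (∀ i, 2 ≤ i → i ≤ m → r i = 2 / ((m : ℚ) + (n : ℚ))) ∧
    (∀ j, m + 1 ≤ j → j ≤ n + 1 → r j = 1 / ((m : ℚ) + (n : ℚ))) := by
  have hpos : (0 : ℚ) < m + n := by positivity
  have hr1 : r 1 = 1 / ((m : ℚ) + n) := by
    rw [eq_div_iff hpos.ne', mul_comm, ← tadpole_sum_eq hm hn h1 h2 h3, h4]
  refine ⟨hr1, fun i h2i him ↦ ?_, fun j hmj hjn ↦ ?_⟩
  · rw [tadpole_head_eq hn h1 h2 h2i him, hr1]
    ring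
  · rw [tadpole_tail_eq hm hn h1 h2 h3 hmj hjn, hr1]
end

section
/- Let k ≥ 2 and n ≥ 1 be integers. The system of linear equations over ℚ in the variables r1, ..., r_{k+n+1} consisting of: 2·r1 − r2 = 0; r_j − r_{j+1} = 0 for each j with 2 ≤ j ≤ k−1; r_k − 2·r_{k+1} = 0; r1 − r_{k+2} = 0; r_l − r_{l+1} = 0 for each l with k+2 ≤ l ≤ k+n; and r1 + r2 + ... + r_{k+n+1} = 1, has the unique solution r1 = 1/(2k+n), r_i = 2/(2k+n) for 2 ≤ i ≤ k, and r_j = 1/(2k+n) for k+1 ≤ j ≤ k+n+1. -/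
/-!
The equations are a chain: `r₂ = 2r₁`, then `r₂ = ⋯ = r_k`, then `r_{k+1} = r_k / 2 = r₁`, and
`r₁ = r_{k+2} = ⋯ = r_{k+n+1}`. So every variable is `r₁` or `2r₁`, the normalization reads
`(2k + n) r₁ = 1`, and this pins down `r₁` and hence the whole solution.
-/

open Finset

theorem eq_of_forall_succ_eq {α : Type*} {f : ℕ → α} {a b : ℕ}
    (h : ∀ j, a ≤ j → j < b → f (j + 1) = f j) {i : ℕ} (hai : a ≤ i) (hib : i ≤ b) :
    f i = f a := by
  induction i, hai using Nat.le_induction with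
  | base => rfl
  | succ m ham ih => rw [h m ham (by omega), ih (by omega)]

theorem sum_Icc_one_eq_of_two_blocks {R : Type*} [CommSemiring R] {r : ℕ → R} {k n : ℕ}
    (hk : 1 ≤ k) (hhead : ∀ i ∈ Ioc 1 k, r i = 2 * r 1)
    (htail : ∀ j ∈ Ioc k (k + n + 1), r j = r 1) :
    ∑ i ∈ Icc 1 (k + n + 1), r i = (2 * k + n) * r 1 := by
  rw [show Icc 1 (k + n + 1) = Ioc 0 (k + n + 1) from Icc_add_one_left_eq_Ioc 0 _,
    ← sum_Ioc_consecutive _ k.zero_le (by omega), ← sum_Ioc_consecutive _ zero_le_one hk,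
    show Ioc 0 1 = {1} from Nat.Ioc_succ_singleton 0, sum_singleton, sum_eq_card_nsmul hhead,
    sum_eq_card_nsmul htail, Nat.card_Ioc, Nat.card_Ioc, show k + n + 1 - k = n + 1 by omega]
  obtain ⟨k, rfl⟩ : ∃ k', k = k' + 1 := ⟨k - 1, by omega⟩
  simp only [Nat.add_sub_cancel, nsmul_eq_mul]
  push_cast
  ring

theorem tadpole_S3_construction_matrix_unique_solution_general (k n : ℕ)
    (hk : 2 ≤ k) (r : ℕ → ℚ)
    (h1 : 2 * r 1 - r 2 = 0)
    (h2 : ∀ j, 2 ≤ j → j ≤ k - 1 → r j - r (j + 1) = 0)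
    (h3 : r k - 2 * r (k + 1) = 0)
    (h4 : r 1 - r (k + 2) = 0)
    (h5 : ∀ l, k + 2 ≤ l → l ≤ k + n → r l - r (l + 1) = 0)
    (h6 : ∑ i ∈ Finset.Icc 1 (k + n + 1), r i = 1) :
    r 1 = 1 / (2 * (k : ℚ) + (n : ℚ)) ∧
    (∀ i, 2 ≤ i → i ≤ k → r i = 2 / (2 * (k : ℚ) + (n : ℚ))) ∧
    (∀ j, k + 1 ≤ j → j ≤ k + n + 1 → r j = 1 / (2 * (k : ℚ) + (n : ℚ))) := by
  have hhead : ∀ i, 2 ≤ i → i ≤ k → r i = 2 * r 1 := fun i hi hik => by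
    rw [eq_of_forall_succ_eq (f := r) (fun j hj hjk => by linarith [h2 j hj (by omega)]) hi hik]
    linarith
  have hk1 : r (k + 1) = r 1 := by linarith [hhead k hk le_rfl]
  have htail : ∀ j, k + 1 ≤ j → j ≤ k + n + 1 → r j = r 1 := fun j hj hjn => by
    refine (eq_of_forall_succ_eq (fun l hl hln => ?_) hj hjn).trans hk1
    rcases hl.eq_or_lt with rfl | hl
    · linarith
    · linarith [h5 l hl (by omega)]
  have hsum := sum_Icc_one_eq_of_two_blocks (by omega)
    (fun i hi => hhead i (mem_Ioc.1 hi).1 (mem_Ioc.1 hi).2)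
    (fun j hj => htail j (mem_Ioc.1 hj).1 (mem_Ioc.1 hj).2)
  have hr1 : r 1 = 1 / (2 * (k : ℚ) + n) := eq_one_div_of_mul_eq_one_right (hsum ▸ h6)
  refine ⟨hr1, fun i hi hik => ?_, fun j hj hjn => (htail j hj hjn).trans hr1⟩
  rw [hhead i hi hik, hr1, mul_one_div]

/-- The construction matrix of the Scenario 3 pot for the tadpole graph `Tad_{2k,n}` with a
short path (Proposition 4.12, equation (11)) has the unique solution `r₁ = 1/(2k+n)`,
`rᵢ = 2/(2k+n)` for `2 ≤ i ≤ k`, and `r_j = 1/(2k+n)` for `k+1 ≤ j ≤ k+n+1`. Variables are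
indexed `1, …, k+n+1`. -/
theorem tadpole_S3_construction_matrix_unique_solution (k n : ℕ)
    (hk : 2 ≤ k) (hn : 1 ≤ n) (r : ℕ → ℚ)
    (h1 : 2 * r 1 - r 2 = 0)
    (h2 : ∀ j, 2 ≤ j → j ≤ k - 1 → r j - r (j + 1) = 0)
    (h3 : r k - 2 * r (k + 1) = 0)
    (h4 : r 1 - r (k + 2) = 0)
    (h5 : ∀ l, k + 2 ≤ l → l ≤ k + n → r l - r (l + 1) = 0)
    (h6 : ∑ i ∈ Finset.Icc 1 (k + n + 1), r i = 1) :
    r 1 = 1 / (2 * (k : ℚ) + (n : ℚ)) ∧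
    (∀ i, 2 ≤ i → i ≤ k → r i = 2 / (2 * (k : ℚ) + (n : ℚ))) ∧
    (∀ j, k + 1 ≤ j → j ≤ k + n + 1 → r j = 1 / (2 * (k : ℚ) + (n : ℚ))) :=
  tadpole_S3_construction_matrix_unique_solution_general k n hk r h1 h2 h3 h4 h5 h6
end
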